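/- Fix n ≥ 1, strictly positive reals a_1,…,a_n, b_1,…,b_n, and let φ^{(n)}(x) = (φ_1(x),…,φ_n(x)) with φ_1(x) = x_1, φ_k(x) = x_k ∏_{l<k}(1-x_l). Let L_n = ∑_{i=1}^n x_i(1-x_i) ∂²/∂x_i² + ∑_{i=1}^n (a_i − (a_i+b_i)x_i) ∂/∂x_i, and for y in the image of (0,1)^n under φ^{(n)} define a_{ij}(y) = y_i y_j ∑_{k=1}^{min(i,j)} (δ_{ki}(1−∑_{l<k} y_l) − y_k)(δ_{kj}(1−∑_{l<k} y_l) − y_k)/(y_k(1−∑_{l≤k} y_l)) and b_i(y) = y_i ∑_{k=1}^{i} (δ_{ik}(1−∑_{l<k} y_l) − y_k)(a_k(1−∑_{l<k} y_l) − (a_k+b_k) y_k)/(y_k(1−∑_{l≤k} y_l)). Then for every twice continuously differentiable F : ℝⁿ → ℝ and every x ∈ (0,1)^n, L_n(F∘φ^{(n)})(x) = ∑_{i,j=1}^n a_{ij}(y) (∂²F/∂y_i∂y_j)(y) + ∑_{i=1}^n b_i(y)(∂F/∂y_i)(y), where y = φ^{(n)}(x). That is, the generator 𝓛 of the GEM process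 is intertwined with the product Wright–Fisher generator via the stick-breaking map. -/

import Mathlib

open Finset

/-- Partial derivative in the `i`-th coordinate. -/
noncomputable def pd {n : ℕ} (i : Fin n) (F : (Fin n → ℝ) → ℝ) (x : Fin n → ℝ) : ℝ :=
  deriv (fun t => F (Function.update x i t)) (x i)

/-- The finite stick-breaking map `φ^{(n)}`: `φ_k(x) = x_k ∏_{l<k} (1 - x_l)`. -/
noncomputable def sbFin {n : ℕ} (x : Fin n → ℝ) : Fin n → ℝ :=
  fun k => x k * ∏ l ∈ Finset.Iio k, (1 - x l)

/-- The diffusion matrix of the GEM process. -/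
noncomputable def gemAFin {n : ℕ} (y : Fin n → ℝ) (i j : Fin n) : ℝ :=
  y i * y j * ∑ k ∈ Finset.Iic (min i j),
    (((if k = i then (1:ℝ) else 0) * (1 - ∑ l ∈ Finset.Iio k, y l) - y k) *
      ((if k = j then (1:ℝ) else 0) * (1 - ∑ l ∈ Finset.Iio k, y l) - y k)) /
    (y k * (1 - ∑ l ∈ Finset.Iic k, y l))

/-- The drift coefficients of the GEM process with parameters `(a_k), (b_k)`. -/
noncomputable def gemBFin {n : ℕ} (a b : Fin n → ℝ) (y : Fin n → ℝ) (i : Fin n) : ℝ :=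
  y i * ∑ k ∈ Finset.Iic i,
    (((if i = k then (1:ℝ) else 0) * (1 - ∑ l ∈ Finset.Iio k, y l) - y k) *
      (a k * (1 - ∑ l ∈ Finset.Iio k, y l) - (a k + b k) * y k)) /
    (y k * (1 - ∑ l ∈ Finset.Iic k, y l))

/-!
The stick-breaking map is triangular: `φ_j` depends only on `x_1, …, x_j`, and the `k`-th row of
its Jacobian `D` (`D k j = ∂φ_j/∂x_k`) does not involve `x_k`. Hence the chain rule gives
`L_n(F ∘ φ) = ∑_{m,j} (∑_k x_k(1-x_k) D k m D k j) ∂_m∂_j F +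
  ∑_j (∑_k (a_k-(a_k+b_k)x_k) D k j) ∂_j F`, evaluated at `y = φ(x)`.
Since `1 - ∑_{l<k} y_l = ∏_{l<k} (1 - x_l)`, the entries `D k j` (`k ≤ j`) can be
written in the `y`-coordinates, and the two inner sums become `a_{mj}(y)` and `b_j(y)`.
-/

noncomputable def sbJac {n : ℕ} (x : Fin n → ℝ) (k j : Fin n) : ℝ :=
  if k = j then ∏ l ∈ Iio j, (1 - x l)
  else if k < j then -(x j * ∏ l ∈ (Iio j).erase k, (1 - x l))
  else 0

lemma hasDerivAt_sbFin_update {n : ℕ} (x : Fin n → ℝ) (k : Fin n) :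
    HasDerivAt (fun t => sbFin (Function.update x k t)) (sbJac x k) (x k) := by
  have hu (l : Fin n) :
      HasDerivAt (fun t => Function.update x k t l) ((Pi.single k 1 : Fin n → ℝ) l) (x k) :=
    hasDerivAt_pi.1 (hasDerivAt_update x k (x k)) l
  refine hasDerivAt_pi.2 fun j => ?_
  refine ((hu j).mul (HasDerivAt.fun_finsetProd (u := Iio j) fun l _ =>
    (hu l).const_sub 1)).congr_deriv ?_
  rw [Function.update_eq_self, sbJac]
  rcases lt_or_ge k j with hkj | hjk
  · rw [Finset.sum_eq_single_of_mem k (mem_Iio.2 hkj)]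
    · simp [hkj.ne, hkj]
    · intro l _ hl; simp [hl.symm]
  · have hsum : ∑ l ∈ Iio j, (∏ i ∈ (Iio j).erase l, (1 - x i)) • -(Pi.single k 1 : Fin n → ℝ) l
        = 0 := sum_eq_zero fun l hl => by simp [((mem_Iio.1 hl).trans_le hjk).ne']
    rw [hsum, mul_zero, add_zero]
    rcases hjk.eq_or_lt with rfl | hjk
    · simp
    · simp [hjk.ne', hjk.not_gt]

lemma sbJac_of_lt {n : ℕ} (x : Fin n → ℝ) {k j : Fin n} (h : j < k) : sbJac x k j = 0 := by
  simp [sbJac, h.ne', h.not_gt]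

lemma sbJac_update_self {n : ℕ} (x : Fin n → ℝ) (k : Fin n) (t : ℝ) (j : Fin n) :
    sbJac (Function.update x k t) k j = sbJac x k j := by
  unfold sbJac
  split_ifs with hkj
  · subst hkj
    exact prod_congr rfl fun l hl => by rw [Function.update_of_ne (mem_Iio.1 hl).ne]
  · rw [Function.update_of_ne (Ne.symm hkj)]
    congr 2
    exact prod_congr rfl fun l hl => by rw [Function.update_of_ne (ne_of_mem_erase hl)]
  · rfl

lemma pd_eq_fderiv {n : ℕ} {G : (Fin n → ℝ) → ℝ} {x : Fin n → ℝ}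
    (hG : DifferentiableAt ℝ G x) (i : Fin n) :
    pd i G x = fderiv ℝ G x (Pi.single i 1) := by
  have hG' : HasFDerivAt G (fderiv ℝ G x) (Function.update x i (x i)) := by
    rw [Function.update_eq_self]; exact hG.hasFDerivAt
  exact (hG'.comp_hasDerivAt (x i) (hasDerivAt_update x i (x i))).deriv

lemma ContinuousLinearMap.apply_eq_sum_mul_single {n : ℕ} (L : (Fin n → ℝ) →L[ℝ] ℝ)
    (v : Fin n → ℝ) : L v = ∑ j, v j * L (Pi.single j 1) := by
  conv_lhs => rw [← Finset.univ_sum_single v]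
  rw [map_sum]
  refine sum_congr rfl fun j _ => ?_
  rw [← smul_eq_mul, ← map_smul, ← Pi.single_smul, smul_eq_mul, mul_one]

lemma hasDerivAt_comp_sbFin_update {n : ℕ} {G : (Fin n → ℝ) → ℝ} {x : Fin n → ℝ}
    (hG : DifferentiableAt ℝ G (sbFin x)) (k : Fin n) :
    HasDerivAt (fun t => G (sbFin (Function.update x k t)))
      (∑ j, pd j G (sbFin x) * sbJac x k j) (x k) := by
  have hG' : HasFDerivAt G (fderiv ℝ G (sbFin x)) (sbFin (Function.update x k (x k))) := by
    rw [Function.update_eq_self]; exact hG.hasFDerivAt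
  refine (hG'.comp_hasDerivAt (x k) (hasDerivAt_sbFin_update x k)).congr_deriv ?_
  rw [ContinuousLinearMap.apply_eq_sum_mul_single]
  exact sum_congr rfl fun j _ => by rw [pd_eq_fderiv hG, mul_comm]

lemma pd_comp_sbFin {n : ℕ} {G : (Fin n → ℝ) → ℝ} {x : Fin n → ℝ}
    (hG : DifferentiableAt ℝ G (sbFin x)) (k : Fin n) :
    pd k (fun z => G (sbFin z)) x = ∑ j, pd j G (sbFin x) * sbJac x k j :=
  (hasDerivAt_comp_sbFin_update hG k).deriv

lemma differentiable_pd_of_contDiff_two {n : ℕ} {F : (Fin n → ℝ) → ℝ} (hF : ContDiff ℝ 2 F)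
    (j : Fin n) : Differentiable ℝ (pd j F) := by
  have hF1 : Differentiable ℝ F := hF.differentiable (by norm_num)
  have hpd : pd j F = fun y => fderiv ℝ F y (Pi.single j 1) :=
    funext fun y => pd_eq_fderiv (hF1 y) j
  rw [hpd]
  exact ((hF.fderiv_right (m := 1) (by norm_num)).differentiable (by norm_num)).clm_apply
    (differentiable_const _)

lemma pd_pd_comp_sbFin {n : ℕ} {F : (Fin n → ℝ) → ℝ} (hF : ContDiff ℝ 2 F)
    (x : Fin n → ℝ) (k : Fin n) :
    pd k (fun z => pd k (fun w => F (sbFin w)) z) x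
      = ∑ m, ∑ j, sbJac x k m * sbJac x k j * pd m (pd j F) (sbFin x) := by
  have hF1 : Differentiable ℝ F := hF.differentiable (by norm_num)
  have hinner : (fun z => pd k (fun w => F (sbFin w)) z)
      = fun z => ∑ j, pd j F (sbFin z) * sbJac z k j :=
    funext fun z => pd_comp_sbFin (hF1 _) k
  -- row `k` of the Jacobian does not involve `x k`, so it is not differentiated
  have hrow (t : ℝ) :
      ∑ j, pd j F (sbFin (Function.update x k t)) * sbJac (Function.update x k t) k j
        = ∑ j, pd j F (sbFin (Function.update x k t)) * sbJac x k j := by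
    simp only [sbJac_update_self]
  rw [hinner, pd]
  simp only [hrow]
  rw [(HasDerivAt.fun_sum fun j _ => (hasDerivAt_comp_sbFin_update
    (differentiable_pd_of_contDiff_two hF j (sbFin x)) k).mul_const (sbJac x k j)).deriv, sum_comm]
  exact sum_congr rfl fun m _ => by rw [sum_mul]; exact sum_congr rfl fun j _ => by ring

lemma prod_Iio_one_sub_ne_zero {n : ℕ} {x : Fin n → ℝ} (h1 : ∀ l, x l ≠ 1) (k : Fin n) :
    ∏ l ∈ Iio k, (1 - x l) ≠ 0 :=
  prod_ne_zero_iff.2 fun l _ => sub_ne_zero.2 (h1 l).symm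

lemma one_sub_sum_Iio_sbFin {n : ℕ} (x : Fin n → ℝ) (k : Fin n) :
    1 - ∑ l ∈ Iio k, sbFin x l = ∏ l ∈ Iio k, (1 - x l) := by
  rw [prod_one_sub_ordered]
  congr 1
  refine sum_congr rfl fun l hl => ?_
  rw [sbFin, Iio_filter_lt, min_eq_right (mem_Iio.1 hl).le]

lemma one_sub_sum_Iic_sbFin {n : ℕ} (x : Fin n → ℝ) (k : Fin n) :
    1 - ∑ l ∈ Iic k, sbFin x l = (∏ l ∈ Iio k, (1 - x l)) * (1 - x k) := by
  rw [← Iio_insert, sum_insert (by simp), sub_add_eq_sub_sub_swap, one_sub_sum_Iio_sbFin, sbFin]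
  ring

lemma sbJac_eq_of_le {n : ℕ} {x : Fin n → ℝ} (h0 : ∀ l, x l ≠ 0) (h1 : ∀ l, x l ≠ 1)
    {k j : Fin n} (hkj : k ≤ j) :
    sbJac x k j = sbFin x j * ((if k = j then 1 else 0) * (1 - ∑ l ∈ Iio k, sbFin x l)
      - sbFin x k) / (sbFin x k * (1 - x k)) := by
  have hP := prod_Iio_one_sub_ne_zero h1 k
  have hk : 1 - x k ≠ 0 := sub_ne_zero.2 (h1 k).symm
  rw [one_sub_sum_Iio_sbFin, sbJac]
  rcases hkj.eq_or_lt with rfl | hkj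
  · simp only [if_true, one_mul, sbFin]
    field_simp [h0 k]
  · simp only [hkj.ne, hkj, if_true, if_false, zero_mul, zero_sub, sbFin]
    rw [← mul_prod_erase _ _ (mem_Iio.2 hkj)]
    field_simp [h0 k]

lemma gemAFin_sbFin {n : ℕ} {x : Fin n → ℝ} (h0 : ∀ l, x l ≠ 0) (h1 : ∀ l, x l ≠ 1)
    (i j : Fin n) :
    gemAFin (sbFin x) i j = ∑ k, x k * (1 - x k) * (sbJac x k i * sbJac x k j) := by
  have hvanish (k : Fin n) (hk : k ∉ Iic (min i j)) :
      x k * (1 - x k) * (sbJac x k i * sbJac x k j) = 0 := by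
    rcases min_lt_iff.1 (not_le.1 (mem_Iic.not.1 hk)) with h | h <;> simp [sbJac_of_lt x h]
  rw [← sum_subset (subset_univ _) fun k _ hk => hvanish k hk, gemAFin, mul_sum]
  refine sum_congr rfl fun k hk => ?_
  have hki : k ≤ i := (mem_Iic.1 hk).trans (min_le_left i j)
  have hkj : k ≤ j := (mem_Iic.1 hk).trans (min_le_right i j)
  have hP := prod_Iio_one_sub_ne_zero h1 k
  have hk1 : 1 - x k ≠ 0 := sub_ne_zero.2 (h1 k).symm
  have hyk : sbFin x k = x k * ∏ l ∈ Iio k, (1 - x l) := rfl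
  rw [sbJac_eq_of_le h0 h1 hki, sbJac_eq_of_le h0 h1 hkj, one_sub_sum_Iic_sbFin, hyk]
  field_simp [h0 k]

lemma gemBFin_sbFin {n : ℕ} (a b : Fin n → ℝ) {x : Fin n → ℝ} (h0 : ∀ l, x l ≠ 0)
    (h1 : ∀ l, x l ≠ 1) (j : Fin n) :
    gemBFin a b (sbFin x) j = ∑ k, (a k - (a k + b k) * x k) * sbJac x k j := by
  have hvanish (k : Fin n) (hk : k ∉ Iic j) : (a k - (a k + b k) * x k) * sbJac x k j = 0 := by
    simp [sbJac_of_lt x (not_le.1 (mem_Iic.not.1 hk))]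
  rw [← sum_subset (subset_univ _) fun k _ hk => hvanish k hk, gemBFin, mul_sum]
  refine sum_congr rfl fun k hk => ?_
  have hP := prod_Iio_one_sub_ne_zero h1 k
  have hk1 : 1 - x k ≠ 0 := sub_ne_zero.2 (h1 k).symm
  have hyk : sbFin x k = x k * ∏ l ∈ Iio k, (1 - x l) := rfl
  rw [sbJac_eq_of_le h0 h1 (mem_Iic.1 hk), one_sub_sum_Iio_sbFin, one_sub_sum_Iic_sbFin, hyk]
  simp only [@eq_comm _ j k]
  field_simp [h0 k]

theorem stickBreak_generator_intertwining_general (n : ℕ)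
    (a b : Fin n → ℝ)
    (F : (Fin n → ℝ) → ℝ) (hF : ContDiff ℝ 2 F)
    (x : Fin n → ℝ) (hx : ∀ k, x k ∈ Set.Ioo (0:ℝ) 1) :
    (∑ i, x i * (1 - x i) * pd i (fun z => pd i (fun w => F (sbFin w)) z) x)
      + (∑ i, (a i - (a i + b i) * x i) * pd i (fun z => F (sbFin z)) x)
    = (∑ i, ∑ j, gemAFin (sbFin x) i j * pd i (fun z => pd j F z) (sbFin x))
      + ∑ i, gemBFin a b (sbFin x) i * pd i F (sbFin x) := by
  have h0 (l : Fin n) : x l ≠ 0 := (hx l).1.ne'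
  have h1 (l : Fin n) : x l ≠ 1 := (hx l).2.ne
  have hF1 : Differentiable ℝ F := hF.differentiable (by norm_num)
  simp only [pd_pd_comp_sbFin hF]
  simp only [pd_comp_sbFin (hF1 _), gemAFin_sbFin h0 h1, gemBFin_sbFin a b h0 h1, mul_sum,
    sum_mul]
  congr 1
  · rw [sum_comm]
    refine sum_congr rfl fun m _ => ?_
    rw [sum_comm]
    exact sum_congr rfl fun j _ => sum_congr rfl fun k _ => by ring
  · rw [sum_comm]
    exact sum_congr rfl fun j _ => sum_congr rfl fun k _ => by ring

/-- **The GEM generator is intertwined with the product Wright–Fisher generator via the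
stick-breaking map.** For `C²` functions `F : ℝⁿ → ℝ` and `x ∈ (0,1)^n`, with
`y = φ^{(n)}(x)`:
`L_n(F∘φ^{(n)})(x) = ∑_{i,j} a_{ij}(y) ∂²_{ij}F(y) + ∑_i b_i(y) ∂_iF(y)`, where
`L_n = ∑_i x_i(1-x_i)∂²_i + ∑_i (a_i − (a_i+b_i)x_i)∂_i`. -/
theorem stickBreak_generator_intertwining (n : ℕ) (hn : 1 ≤ n)
    (a b : Fin n → ℝ) (ha : ∀ i, 0 < a i) (hb : ∀ i, 0 < b i)
    (F : (Fin n → ℝ) → ℝ) (hF : ContDiff ℝ 2 F)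
    (x : Fin n → ℝ) (hx : ∀ k, x k ∈ Set.Ioo (0:ℝ) 1) :
    (∑ i, x i * (1 - x i) * pd i (fun z => pd i (fun w => F (sbFin w)) z) x)
      + (∑ i, (a i - (a i + b i) * x i) * pd i (fun z => F (sbFin z)) x)
    = (∑ i, ∑ j, gemAFin (sbFin x) i j * pd i (fun z => pd j F z) (sbFin x))
      + ∑ i, gemBFin a b (sbFin x) i * pd i F (sbFin x) :=
  stickBreak_generator_intertwining_general n a b F hF x hx
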